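/- Fix a phase-space point z_* ∈ ℝ^{2n}, a real number λ, and orthonormal vectors u, v ∈ ℝ^n with L(z_*)u = λu and L(z_*)v = λv. Then the quantity W_m = b_m(z_*)·(u_{m+1} v_m − u_m v_{m+1}) (vector indices mod n) is independent of m ∈ {1, …, n}, and its common value is nonzero. -/

import Mathlib

open Matrix BigOperators

noncomputable def bfun {n : ℕ} [NeZero n] (z : (Fin n → ℝ) × (Fin n → ℝ)) (j : Fin n) : ℝ :=
  Real.exp ((z.1 j - z.1 (j + 1)) / 2)

/-- The Lax matrix `L`. -/
noncomputable def Lax {n : ℕ} [NeZero n] (z : (Fin n → ℝ) × (Fin n → ℝ)) :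
    Matrix (Fin n) (Fin n) ℝ := fun r s =>
  (if r = s then z.2 r else 0) + (if r + 1 = s then bfun z r else 0) +
    (if s + 1 = r then bfun z s else 0)

/-- The sign `σ_r`, equal to `-1` for the index corresponding to `b_n`. -/
noncomputable def sgn {n : ℕ} [NeZero n] (j : Fin n) : ℝ := if j + 1 = 0 then -1 else 1

/-- The Lax matrix `L̄` obtained from `L` by `b_n ↦ -b_n`. -/
noncomputable def LaxBar {n : ℕ} [NeZero n] (z : (Fin n → ℝ) × (Fin n → ℝ)) :
    Matrix (Fin n) (Fin n) ℝ := fun r s =>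
  (if r = s then z.2 r else 0) + (if r + 1 = s then sgn r * bfun z r else 0) +
    (if s + 1 = r then sgn s * bfun z s else 0)

/-- The canonical Poisson bracket on `ℝ^{2n}`. -/
noncomputable def pb {n : ℕ} (f g : (Fin n → ℝ) × (Fin n → ℝ) → ℝ)
    (z : (Fin n → ℝ) × (Fin n → ℝ)) : ℝ :=
  ∑ j : Fin n,
    (fderiv ℝ f z (Pi.single j 1, 0) * fderiv ℝ g z (0, Pi.single j 1) -
     fderiv ℝ f z (0, Pi.single j 1) * fderiv ℝ g z (Pi.single j 1, 0))

/-- The integrals of motion `F_j = (1/j) Tr L^j`. -/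
noncomputable def F {n : ℕ} [NeZero n] (j : ℕ) (z : (Fin n → ℝ) × (Fin n → ℝ)) : ℝ :=
  (1 / j : ℝ) * (Lax z ^ j).trace

/-- The map `F = (F_1, …, F_n) : ℝ^{2n} → ℝ^n`. -/
noncomputable def Fvec {n : ℕ} [NeZero n] (z : (Fin n → ℝ) × (Fin n → ℝ)) : Fin n → ℝ :=
  fun j => F (j.val + 1) z

/-- The corank of `dF(z)`. -/
noncomputable def corank (n : ℕ) [NeZero n] (z : (Fin n → ℝ) × (Fin n → ℝ)) : ℕ :=
  n - Module.finrank ℝ (LinearMap.range (fderiv ℝ (Fvec (n := n)) z).toLinearMap)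

/-- Number of (real) eigenvalues of `A` with two-dimensional eigenspace. -/
noncomputable def nuCount {n : ℕ} (A : Matrix (Fin n) (Fin n) ℝ) : ℕ :=
  {μ : ℝ | Module.finrank ℝ (LinearMap.ker (Matrix.toLin' (A - μ • 1))) = 2}.ncard

/-! The eigenvalue equation `L u = λ u` is the periodic three-term recurrence
`b_r u_{r+1} + b_{r-1} u_{r-1} + p_r u_r = λ u_r`. For two solutions `u, v` the discrete
Wronskian `W_m = b_m (u_{m+1} v_m - u_m v_{m+1})` satisfies `W_{m+1} = W_m`, so it is constant
around the cycle. If it vanished, then for `u_j ≠ 0` the solution `v_j u - u_j v` would vanish at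
`j` and `j + 1`; since all `b_r ≠ 0`, the recurrence propagates this to the whole cycle, so `u` and
`v` would be linearly dependent, which orthonormality excludes. -/

open Fin.NatCast in
theorem Fin.forall_of_add_one {n : ℕ} [NeZero n] {P : Fin n → Prop} (m : Fin n) (hm : P m)
    (h : ∀ r, P r → P (r + 1)) (j : Fin n) : P j := by
  have hk : ∀ k : ℕ, P (m + k) := by
    intro k
    induction k with
    | zero => simpa using hm
    | succ k ih => simpa [Nat.cast_succ, ← add_assoc] using h _ ih
  simpa [Fin.cast_val_eq_self] using hk (j - m).val

section ThreeTermRecurrence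

variable {K : Type*} [CommRing K] {n : ℕ} [NeZero n]

def IsThreeTermSolution (a b : Fin n → K) (lam : K) (w : Fin n → K) : Prop :=
  ∀ r, a r * w r + b r * w (r + 1) + b (r - 1) * w (r - 1) = lam * w r

def wronskian (b u v : Fin n → K) (m : Fin n) : K :=
  b m * (u (m + 1) * v m - u m * v (m + 1))

variable {a b : Fin n → K} {lam : K} {u v w : Fin n → K}

theorem IsThreeTermSolution.smul_add_smul (hu : IsThreeTermSolution a b lam u)
    (hv : IsThreeTermSolution a b lam v) (c d : K) :
    IsThreeTermSolution a b lam (c • u + d • v) := by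
  intro r
  simp only [Pi.add_apply, Pi.smul_apply, smul_eq_mul]
  linear_combination c * hu r + d * hv r

theorem wronskian_add_one (hu : IsThreeTermSolution a b lam u)
    (hv : IsThreeTermSolution a b lam v) (m : Fin n) :
    wronskian b u v (m + 1) = wronskian b u v m := by
  have hu' := hu (m + 1)
  have hv' := hv (m + 1)
  rw [add_sub_cancel_right] at hu' hv'
  unfold wronskian
  linear_combination v (m + 1) * hu' - u (m + 1) * hv'

theorem wronskian_eq (hu : IsThreeTermSolution a b lam u) (hv : IsThreeTermSolution a b lam v)
    (m m' : Fin n) : wronskian b u v m = wronskian b u v m' :=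
  Fin.forall_of_add_one (P := fun r => wronskian b u v r = wronskian b u v m) m rfl
    (fun r hr => (wronskian_add_one hu hv r).trans hr) m' |>.symm

theorem IsThreeTermSolution.eq_zero_of_eq_zero_of_eq_zero [NoZeroDivisors K]
    (hb : ∀ r, b r ≠ 0) (hw : IsThreeTermSolution a b lam w) (m : Fin n) (h₀ : w m = 0)
    (h₁ : w (m + 1) = 0) : w = 0 := by
  suffices ∀ j, w j = 0 ∧ w (j + 1) = 0 from funext fun j => (this j).1
  refine Fin.forall_of_add_one m ⟨h₀, h₁⟩ fun r ⟨hr₀, hr₁⟩ => ⟨hr₁, ?_⟩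
  have hrec := hw (r + 1)
  rw [add_sub_cancel_right, hr₀, hr₁] at hrec
  have : b (r + 1) * w (r + 1 + 1) = 0 := by linear_combination hrec
  exact (mul_eq_zero.mp this).resolve_left (hb _)

theorem wronskian_ne_zero [IsDomain K] (hb : ∀ r, b r ≠ 0) (hu : IsThreeTermSolution a b lam u)
    (hv : IsThreeTermSolution a b lam v) (hli : LinearIndependent K ![u, v]) (m : Fin n) :
    wronskian b u v m ≠ 0 := by
  intro hm
  obtain ⟨j, hj⟩ : ∃ j, u j ≠ 0 := Function.ne_iff.mp (hli.ne_zero 0)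
  have hWj : u (j + 1) * v j - u j * v (j + 1) = 0 :=
    (mul_eq_zero.mp ((wronskian_eq hu hv j m).trans hm)).resolve_left (hb j)
  have hdep : v j • u + (-u j) • v = 0 := by
    refine (hu.smul_add_smul hv _ _).eq_zero_of_eq_zero_of_eq_zero hb j ?_ ?_
    · simp only [Pi.add_apply, Pi.smul_apply, smul_eq_mul]; ring
    · simp only [Pi.add_apply, Pi.smul_apply, smul_eq_mul]; linear_combination hWj
  exact hj (neg_eq_zero.mp (LinearIndependent.pair_iff.mp hli _ _ hdep).2)

end ThreeTermRecurrence

theorem linearIndependent_pair_of_dotProduct {K : Type*} [CommRing K] {n : ℕ} {u v : Fin n → K}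
    (huu : u ⬝ᵥ u = 1) (hvv : v ⬝ᵥ v = 1) (huv : u ⬝ᵥ v = 0) : LinearIndependent K ![u, v] := by
  refine LinearIndependent.pair_iff.mpr fun s t hst => ⟨?_, ?_⟩
  · simpa [dotProduct_add, dotProduct_smul, huu, huv] using congrArg (u ⬝ᵥ ·) hst
  · simpa [dotProduct_add, dotProduct_smul, hvv, dotProduct_comm v u, huv] using
      congrArg (v ⬝ᵥ ·) hst

theorem Lax_mulVec_apply {n : ℕ} [NeZero n] (z : (Fin n → ℝ) × (Fin n → ℝ)) (w : Fin n → ℝ)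
    (r : Fin n) :
    (Lax z *ᵥ w) r = z.2 r * w r + bfun z r * w (r + 1) + bfun z (r - 1) * w (r - 1) := by
  have hcond : ∀ s : Fin n, s + 1 = r ↔ r - 1 = s := fun s => by
    rw [sub_eq_iff_eq_add, eq_comm]
  simp only [mulVec, dotProduct, Lax, add_mul, ite_mul, zero_mul, Finset.sum_add_distrib, hcond]
  simp

theorem isThreeTermSolution_of_Lax_mulVec_eq_smul {n : ℕ} [NeZero n] {z : (Fin n → ℝ) × (Fin n → ℝ)}
    {lam : ℝ} {w : Fin n → ℝ} (hw : Lax z *ᵥ w = lam • w) :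
    IsThreeTermSolution z.2 (bfun z) lam w := fun r => by
  simpa [Lax_mulVec_apply] using congrFun hw r

theorem stmt16_general (n : ℕ) [NeZero n] (z : (Fin n → ℝ) × (Fin n → ℝ))
    (lam : ℝ) (u v : Fin n → ℝ)
    (hu : Lax z *ᵥ u = lam • u) (hv : Lax z *ᵥ v = lam • v)
    (huu : u ⬝ᵥ u = 1) (hvv : v ⬝ᵥ v = 1) (huv : u ⬝ᵥ v = 0) :
    (∀ m m' : Fin n,
      bfun z m * (u (m + 1) * v m - u m * v (m + 1)) =
        bfun z m' * (u (m' + 1) * v m' - u m' * v (m' + 1))) ∧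
    (∀ m : Fin n, bfun z m * (u (m + 1) * v m - u m * v (m + 1)) ≠ 0) := by
  have hu' := isThreeTermSolution_of_Lax_mulVec_eq_smul hu
  have hv' := isThreeTermSolution_of_Lax_mulVec_eq_smul hv
  exact ⟨wronskian_eq hu' hv',
    wronskian_ne_zero (fun r => (Real.exp_pos _).ne') hu' hv'
      (linearIndependent_pair_of_dotProduct huu hvv huv)⟩

/-- the Wronskian-like quantity W_m = b_m (u_{m+1}v_m − u_m v_{m+1})
is independent of m and nonzero, for orthonormal eigenvectors u, v of L(z) with
a common eigenvalue. -/
theorem stmt16 (n : ℕ) [NeZero n] (hn : 2 ≤ n) (z : (Fin n → ℝ) × (Fin n → ℝ))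
    (lam : ℝ) (u v : Fin n → ℝ)
    (hu : Lax z *ᵥ u = lam • u) (hv : Lax z *ᵥ v = lam • v)
    (huu : u ⬝ᵥ u = 1) (hvv : v ⬝ᵥ v = 1) (huv : u ⬝ᵥ v = 0) :
    (∀ m m' : Fin n,
      bfun z m * (u (m + 1) * v m - u m * v (m + 1)) =
        bfun z m' * (u (m' + 1) * v m' - u m' * v (m' + 1))) ∧
    (∀ m : Fin n, bfun z m * (u (m + 1) * v m - u m * v (m + 1)) ≠ 0) :=
  stmt16_general n z lam u v hu hv huu hvv huv
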